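/- arXiv:1802.04026 — 3 statements merged into one kernel-verified Lean document; each statement's English description precedes it below -/
import Mathlib

section
/- For every a ∈ H^∞ and every f ∈ H^2, the function a·f lies in the range of the co-analytic Toeplitz operator T_{\bar{a}}, i.e. aH^2 ⊆ M(\bar{a}) := T_{\bar{a}}H^2. -/
open Complex Set

noncomputable section

/-- The open unit disk in `ℂ`. -/
def unitDisk : Set ℂ := Metric.ball 0 1

/-- The `n`-th Taylor coefficient of `f` at `0`. -/
def coef (f : ℂ → ℂ) (n : ℕ) : ℂ := iteratedDeriv n f 0 / (n.factorial : ℂ)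

/-- `f` belongs to the Hardy space `H²` of the unit disk. -/
def MemH2 (f : ℂ → ℂ) : Prop :=
  DifferentiableOn ℂ f unitDisk ∧ Summable fun n => ‖coef f n‖ ^ 2

/-- The `H²` norm. -/
def norm2 (f : ℂ → ℂ) : ℝ := Real.sqrt (∑' n, ‖coef f n‖ ^ 2)

/-- The `H²` inner product. -/
def inner2 (f g : ℂ → ℂ) : ℂ := ∑' n, coef f n * (starRingEnd ℂ) (coef g n)

/-- `f` belongs to `H^∞`: bounded and analytic on the unit disk. -/
def MemHinf (f : ℂ → ℂ) : Prop :=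
  DifferentiableOn ℂ f unitDisk ∧ ∃ C, ∀ z ∈ unitDisk, ‖f z‖ ≤ C

/-- The `H^∞` (sup) norm. -/
def normInf (f : ℂ → ℂ) : ℝ := sSup ((fun z => ‖f z‖) '' unitDisk)

/-- The co-analytic Toeplitz operator `T_{\bar a}` in terms of Taylor
coefficients: the `n`-th coefficient of `T_{\bar a} f` is
`∑ₖ conj (â k) * f̂ (n + k)`. -/
def Tbar (a f : ℂ → ℂ) : ℂ → ℂ :=
  fun z => ∑' n : ℕ, (∑' k : ℕ, (starRingEnd ℂ) (coef a k) * coef f (n + k)) * z ^ n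

/-- Membership in the range space `M(ā) = T_{\bar a} H²` (as functions on the disk). -/
def MemMbar (a g : ℂ → ℂ) : Prop :=
  ∃ f, MemH2 f ∧ Set.EqOn g (Tbar a f) unitDisk

/-- The range norm on `M(ā)`: `‖T_{\bar a} f‖_{ā} = ‖f‖_{H²}`. -/
def normMbar (a g : ℂ → ℂ) : ℝ :=
  sInf {r | ∃ f, MemH2 f ∧ Set.EqOn g (Tbar a f) unitDisk ∧ r = norm2 f}

/-- `a` is outer: the analytic Toeplitz operator `T_a` (multiplication by `a`)
has dense range in `H²`. -/
def Outer (a : ℂ → ℂ) : Prop :=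
  ∀ g, MemH2 g → ∀ ε > 0, ∃ f, MemH2 f ∧ norm2 (fun z => g z - a z * f z) < ε

/-- `u` is inner: multiplication by `u` is isometric on `H²`. -/
def IsInner (u : ℂ → ℂ) : Prop :=
  MemHinf u ∧ ∀ f, MemH2 f → norm2 (fun z => u z * f z) = norm2 f

/-- `p` is (given by) a polynomial of degree `< N`, i.e. of degree at most `N - 1`. -/
def MemPoly (N : ℕ) (p : ℂ → ℂ) : Prop :=
  ∃ q : Polynomial ℂ, q.degree < (N : WithBot ℕ) ∧ ∀ z, p z = q.eval z

/-- `φ` is a multiplier from `M(ā₁)` to `M(ā₂)`. -/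
def Mult (a₁ a₂ φ : ℂ → ℂ) : Prop :=
  DifferentiableOn ℂ φ unitDisk ∧
    ∀ f, MemMbar a₁ f → MemMbar a₂ fun z => φ z * f z

/-- The backward shift `B f = (f - f 0) / z`. -/
def Bshift (f : ℂ → ℂ) : ℂ → ℂ :=
  fun z => if z = 0 then deriv f 0 else (f z - f 0) / z

/-!
Let `α`, `φ` be the Taylor coefficients of `a` and `f`; both are square summable. For `α` this is
Parseval on the circle of radius `r < 1`, which bounds `∑ |αₙ|² r²ⁿ` by `sup |a|²`, and `r → 1`.

Extend `α` by zero to `ℤ`. The translates of `α` and of `conjneg α` have the same Gram matrix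
(substitute `m ↦ s + t - m`), so the Laurent operator `L_a` and its adjoint `L_ā` satisfy
`‖L_ā v‖ = ‖L_a v‖` for finitely supported `v`. Hence `L_a v ↦ ⟪φ, L_ā v⟫` is bounded on the range
of `L_a`, and by Hahn–Banach and Riesz it equals `⟪g, ·⟫` for some `g ∈ ℓ²(ℤ)`. At unit vectors
this says that the restriction `γ` of `g` to `ℕ` satisfies `T_ā γ = aφ`: since `φ` vanishes at
negative indices, pairing with `φ` only sees the compression `T_ā` of `L_ā`.
-/

open Finset Real
open scoped InnerProductSpace ComplexConjugate

section InnerProductSpace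

variable {𝕜 E : Type*} [RCLike 𝕜] [NormedAddCommGroup E] [InnerProductSpace 𝕜 E]

theorem norm_linearCombination_eq_of_inner_eq {ι : Type*} {x y : ι → E}
    (h : ∀ s t, ⟪x s, x t⟫_𝕜 = ⟪y s, y t⟫_𝕜) (v : ι →₀ 𝕜) :
    ‖Finsupp.linearCombination 𝕜 x v‖ = ‖Finsupp.linearCombination 𝕜 y v‖ := by
  simp only [norm_eq_sqrt_re_inner (𝕜 := 𝕜), Finsupp.linearCombination_apply, Finsupp.sum,
    sum_inner, inner_sum, inner_smul_left, inner_smul_right, h]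

theorem exists_inner_eq_of_norm_le [CompleteSpace E] {V : Type*} [AddCommGroup V] [Module 𝕜 V]
    (S T : V →ₗ[𝕜] E) (hST : ∀ v, ‖S v‖ ≤ ‖T v‖) (y : E) :
    ∃ g : E, ∀ v, ⟪g, T v⟫_𝕜 = ⟪y, S v⟫_𝕜 := by
  set Ψ : V →ₗ[𝕜] 𝕜 := innerₛₗ 𝕜 y ∘ₗ S
  have hΨ v : ‖Ψ v‖ ≤ ‖y‖ * ‖T v‖ := (norm_inner_le_norm y (S v)).trans (by gcongr; exact hST v)
  have hker : LinearMap.ker T ≤ LinearMap.ker Ψ := fun v hv => by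
    simpa [LinearMap.mem_ker.mp hv] using hΨ v
  set ℓ : LinearMap.range T →ₗ[𝕜] 𝕜 :=
    (LinearMap.ker T).liftQ Ψ hker ∘ₗ T.quotKerEquivRange.symm.toLinearMap
  have hℓ v : ℓ ⟨T v, LinearMap.mem_range_self T v⟩ = Ψ v := by
    simp [ℓ, LinearMap.quotKerEquivRange_symm_apply_image]
  have hbound (w : LinearMap.range T) : ‖ℓ w‖ ≤ ‖y‖ * ‖w‖ := by
    obtain ⟨_, v, rfl⟩ := w
    exact (hℓ v).symm ▸ hΨ v
  obtain ⟨G, hG, -⟩ := exists_extension_norm_eq _ (ℓ.mkContinuous ‖y‖ hbound)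
  refine ⟨(InnerProductSpace.toDual 𝕜 E).symm G, fun v => ?_⟩
  rw [InnerProductSpace.toDual_symm_apply]
  exact (hG ⟨T v, LinearMap.mem_range_self T v⟩).trans (hℓ v)

end InnerProductSpace

theorem memℓp_two_iff {ι E : Type*} [NormedAddCommGroup E] {f : ι → E} :
    Memℓp f 2 ↔ Summable fun i => ‖f i‖ ^ 2 := by
  rw [memℓp_gen_iff (by norm_num)]
  norm_num

section Laurent

variable {G : Type*} [AddCommGroup G]

theorem Memℓp.translate {E : Type*} [NormedAddCommGroup E] {A : G → E} (hA : Memℓp A 2) (t : G) :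
    Memℓp (translate t A) 2 :=
  memℓp_two_iff.mpr <| (Equiv.subRight t).summable_iff.mpr (memℓp_two_iff.mp hA)

theorem Memℓp.conjneg {A : G → ℂ} (hA : Memℓp A 2) : Memℓp (conjneg A) 2 :=
  memℓp_two_iff.mpr <| by
    simpa [Function.comp_def] using (Equiv.neg G).summable_iff.mpr (memℓp_two_iff.mp hA)

theorem tsum_conj_translate_conjneg_mul (A : G → ℂ) (s t : G) :
    ∑' m, conj (translate s (conjneg A) m) * translate t (conjneg A) m =
      ∑' m, conj (translate s A m) * translate t A m := by
  rw [← (Equiv.subLeft (s + t)).tsum_eq]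
  refine tsum_congr fun m => ?_
  simp only [translate_apply, conjneg_apply, Equiv.subLeft_apply, Complex.conj_conj]
  rw [show -(s + t - m - s) = m - t by abel, show -(s + t - m - t) = m - s by abel, mul_comm]

end Laurent

section ExtendByZero

variable (α : ℕ → ℂ)

theorem extend_natCast_of_neg {m : ℤ} (hm : m < 0) : Function.extend ((↑) : ℕ → ℤ) α 0 m = 0 :=
  Function.extend_apply' _ _ _ fun ⟨k, hk⟩ => by omega

theorem memℓp_extend_natCast (hα : Summable fun n => ‖α n‖ ^ 2) :
    Memℓp (Function.extend ((↑) : ℕ → ℤ) α 0) 2 := by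
  refine memℓp_two_iff.mpr <| (Nat.cast_injective.summable_iff fun m hm => ?_).mp ?_
  · simp [Function.extend_apply' _ _ _ hm]
  · simpa [Function.comp_def, Nat.cast_injective.extend_apply] using hα

theorem tsum_conj_mul_translate_extend_natCast (g : ℤ → ℂ) (n : ℕ) :
    ∑' m, conj (g m) * translate (n : ℤ) (Function.extend ((↑) : ℕ → ℤ) α 0) m =
      conj (∑' k : ℕ, conj (α k) * g (n + k)) := by
  have hinj : Function.Injective fun k : ℕ => (n : ℤ) + k := fun _ _ h => by simpa using h
  rw [← hinj.tsum_eq, Complex.conj_tsum]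
  · refine tsum_congr fun k => ?_
    simp [translate_apply, Nat.cast_injective.extend_apply, mul_comm]
  · refine Function.support_subset_iff'.mpr fun m hrange => ?_
    rw [translate_apply,
      Function.extend_apply' _ _ _ fun ⟨k, hk⟩ => hrange ⟨k, show (n : ℤ) + k = m by omega⟩]
    simp

theorem tsum_conj_extend_natCast_mul_translate_conjneg (φ : ℕ → ℂ) (n : ℕ) :
    ∑' m, conj (Function.extend ((↑) : ℕ → ℤ) φ 0 m) *
        translate (n : ℤ) (conjneg (Function.extend ((↑) : ℕ → ℤ) α 0)) m =
      conj (∑ i ∈ range (n + 1), φ i * α (n - i)) := by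
  rw [← Nat.cast_injective.tsum_eq, tsum_eq_sum (s := range (n + 1)), map_sum]
  · refine sum_congr rfl fun i hi => ?_
    have hin : ((n - i : ℕ) : ℤ) = -((i : ℤ) - n) := by
      rw [Nat.cast_sub (Nat.lt_succ_iff.mp (mem_range.mp hi))]; ring
    simp [translate_apply, conjneg_apply, Nat.cast_injective.extend_apply, ← hin]
  · intro i hi
    rw [translate_apply, conjneg_apply, extend_natCast_of_neg α (by simp at hi; omega)]
    simp
  · refine Function.support_subset_iff'.mpr fun m hrange => ?_
    rw [Function.extend_apply' _ _ _ fun ⟨k, hk⟩ => hrange ⟨k, hk⟩]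
    simp

end ExtendByZero

theorem exists_summable_sq_tsum_conj_mul_eq {α φ : ℕ → ℂ} (hα : Summable fun n => ‖α n‖ ^ 2)
    (hφ : Summable fun n => ‖φ n‖ ^ 2) :
    ∃ γ : ℕ → ℂ, (Summable fun n => ‖γ n‖ ^ 2) ∧
      ∀ n, ∑' k, conj (α k) * γ (n + k) = ∑ i ∈ range (n + 1), φ i * α (n - i) := by
  set A := Function.extend ((↑) : ℕ → ℤ) α 0
  have hA := memℓp_extend_natCast α hα
  -- `linearCombination ℂ τ` and `linearCombination ℂ σ` are `L_a` and `L_ā` on finite sequences.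
  let τ (t : ℤ) : lp (fun _ : ℤ => ℂ) 2 := ⟨translate t A, hA.translate t⟩
  let σ (t : ℤ) : lp (fun _ : ℤ => ℂ) 2 := ⟨translate t (conjneg A), hA.conjneg.translate t⟩
  have hgram s t : ⟪σ s, σ t⟫_ℂ = ⟪τ s, τ t⟫_ℂ := by
    simpa only [lp.inner_eq_tsum, RCLike.inner_apply'] using
      tsum_conj_translate_conjneg_mul A s t
  obtain ⟨g, hg⟩ := exists_inner_eq_of_norm_le (Finsupp.linearCombination ℂ σ)
    (Finsupp.linearCombination ℂ τ) (fun v => (norm_linearCombination_eq_of_inner_eq hgram v).le)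
    ⟨_, memℓp_extend_natCast φ hφ⟩
  refine ⟨fun n => g n, (memℓp_two_iff.mp g.2).comp_injective Nat.cast_injective, fun n => ?_⟩
  have h := hg (Finsupp.single n 1)
  simp only [Finsupp.linearCombination_single, one_smul, lp.inner_eq_tsum,
    RCLike.inner_apply'] at h
  rw [tsum_conj_mul_translate_extend_natCast, tsum_conj_extend_natCast_mul_translate_conjneg] at h
  exact (starRingEnd ℂ).injective h

theorem coef_eq_coeff_of_hasFPowerSeriesAt {f : ℂ → ℂ} {p : FormalMultilinearSeries ℂ ℂ ℂ}
    (hf : HasFPowerSeriesAt f p 0) (n : ℕ) : coef f n = p.coeff n := by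
  rw [← hf.analyticAt.hasFPowerSeriesAt.eq_formalMultilinearSeries hf,
    FormalMultilinearSeries.coeff_ofScalars, coef]

theorem hasSum_coef_mul_pow {f : ℂ → ℂ} (hf : DifferentiableOn ℂ f unitDisk) {z : ℂ}
    (hz : z ∈ unitDisk) : HasSum (fun n => coef f n * z ^ n) (f z) := by
  convert Complex.hasSum_taylorSeries_on_ball hf hz using 1
  · rfl
  · funext n
    rw [coef, sub_zero, smul_eq_mul, smul_eq_mul]
    ring

theorem coef_mul {f g : ℂ → ℂ} (hf : DifferentiableOn ℂ f unitDisk)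
    (hg : DifferentiableOn ℂ g unitDisk) (n : ℕ) :
    coef (fun z => f z * g z) n = ∑ i ∈ range (n + 1), coef f i * coef g (n - i) := by
  have hdisk : unitDisk ∈ nhds (0 : ℂ) := Metric.ball_mem_nhds 0 one_pos
  have hf' := (hf.contDiffOn (n := n) Metric.isOpen_ball).contDiffAt hdisk
  have hg' := (hg.contDiffOn (n := n) Metric.isOpen_ball).contDiffAt hdisk
  rw [coef, iteratedDeriv_fun_mul hf' hg', sum_div]
  refine sum_congr rfl fun i hi => ?_
  have hin : i ≤ n := Nat.lt_succ_iff.mp (mem_range.mp hi)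
  have hfact : (n.factorial : ℂ) = n.choose i * i.factorial * (n - i).factorial := by
    exact_mod_cast (Nat.choose_mul_factorial_mul_factorial hin).symm
  have hc : (n.choose i : ℂ) ≠ 0 := by exact_mod_cast (Nat.choose_pos hin).ne'
  rw [coef, coef, hfact]
  field_simp

theorem exists_memH2_coef_eq {γ : ℕ → ℂ} (hγ : Summable fun n => ‖γ n‖ ^ 2) :
    ∃ g, MemH2 g ∧ ∀ n, coef g n = γ n := by
  set p := FormalMultilinearSeries.ofScalars ℂ γ
  have hγ0 : Filter.Tendsto (fun n => ‖p n‖ * (1 : NNReal) ^ n) Filter.atTop (nhds 0) := by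
    simpa [p, Real.sqrt_sq (norm_nonneg _)] using hγ.tendsto_atTop_zero.sqrt
  have hrad : 1 ≤ p.radius := by exact_mod_cast p.le_radius_of_tendsto hγ0
  have hp := p.hasFPowerSeriesOnBall (zero_lt_one.trans_le hrad)
  have hcoef n : coef p.sum n = γ n := by
    rw [coef_eq_coeff_of_hasFPowerSeriesAt hp.hasFPowerSeriesAt,
      FormalMultilinearSeries.coeff_ofScalars]
  have hdisk : unitDisk ⊆ Metric.eball 0 p.radius := by
    rw [unitDisk, ← NNReal.coe_one, ← Metric.eball_coe]
    exact Metric.eball_subset_eball (by exact_mod_cast hrad)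
  exact ⟨p.sum, ⟨hp.differentiableOn.mono hdisk, by simpa only [hcoef] using hγ⟩, hcoef⟩

theorem fourierCoeffOn_comp_circleMap {f : ℂ → ℂ} {r : NNReal} (hr : 0 < r)
    (hf : DifferentiableOn ℂ f (Metric.closedBall 0 r)) (n : ℕ) :
    fourierCoeffOn two_pi_pos (fun θ => f (circleMap 0 r θ)) n = coef f n * r ^ n := by
  rw [coef_eq_coeff_of_hasFPowerSeriesAt (hf.hasFPowerSeriesOnBall hr).hasFPowerSeriesAt,
    FormalMultilinearSeries.coeff, Pi.one_def, cauchyPowerSeries_apply, circleIntegral,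
    fourierCoeffOn_eq_integral, Complex.real_smul, smul_eq_mul, sub_zero,
    ← intervalIntegral.integral_const_mul, ← intervalIntegral.integral_const_mul,
    ← intervalIntegral.integral_mul_const]
  refine intervalIntegral.integral_congr fun θ _ => ?_
  simp only [fourier_coe_apply, circleMap_zero, deriv_circleMap, smul_eq_mul, sub_zero]
  have hexp : cexp (2 * π * I * ((-(n : ℤ) : ℤ) : ℂ) * θ / ((2 * π : ℝ) : ℂ))
      = (cexp (θ * I))⁻¹ ^ n := by
    rw [← Complex.exp_neg, ← Complex.exp_nat_mul]
    congr 1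
    push_cast
    field_simp
  have hr0 : (r : ℂ) ≠ 0 := by exact_mod_cast hr.ne'
  have hpi : (π : ℂ) ≠ 0 := by exact_mod_cast pi_ne_zero
  rw [hexp]
  push_cast
  field_simp
  rw [div_mul_eq_div_div, div_pow, div_pow, div_pow]
  field_simp

theorem sum_range_sq_norm_coef_mul_pow_le {f : ℂ → ℂ} {C : ℝ}
    (hf : DifferentiableOn ℂ f unitDisk) (hC : ∀ z ∈ unitDisk, ‖f z‖ ≤ C) {r : NNReal}
    (hr0 : 0 < r) (hr1 : r < 1) (N : ℕ) :
    ∑ n ∈ range N, ‖coef f n * r ^ n‖ ^ 2 ≤ C ^ 2 := by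
  have hball : Metric.closedBall (0 : ℂ) r ⊆ unitDisk := Metric.closedBall_subset_ball hr1
  set F : ℝ → ℂ := fun θ => f (circleMap 0 r θ)
  have hmaps θ : circleMap 0 r θ ∈ unitDisk := hball (circleMap_mem_closedBall 0 r.2 θ)
  have hFC θ : ‖F θ‖ ≤ C := hC _ (hmaps θ)
  have hFc : Continuous F :=
    hf.continuousOn.comp_continuous (continuous_circleMap 0 r) hmaps
  have hParseval := hasSum_sq_fourierCoeffOn two_pi_pos
    (MeasureTheory.MemLp.of_bound (p := 2) hFc.aestronglyMeasurable C
      (MeasureTheory.ae_of_all _ hFC))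
  have hintegral : ∫ θ in (0 : ℝ)..2 * π, ‖F θ‖ ^ 2 ≤ C ^ 2 * (2 * π) := by
    refine (le_abs_self _).trans ?_
    simpa [abs_of_pos two_pi_pos] using
      intervalIntegral.norm_integral_le_of_norm_le_const (a := 0) (b := 2 * π)
        (f := fun θ => ‖F θ‖ ^ 2) (C := C ^ 2) fun θ _ => by
          rw [Real.norm_eq_abs, abs_of_nonneg (by positivity)]
          exact pow_le_pow_left₀ (norm_nonneg _) (hFC θ) 2
  calc ∑ n ∈ range N, ‖coef f n * r ^ n‖ ^ 2
      = ∑ i ∈ (range N).map Nat.castEmbedding, ‖fourierCoeffOn two_pi_pos F i‖ ^ 2 := by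
        simp [F, fourierCoeffOn_comp_circleMap hr0 (hf.mono hball)]
    _ ≤ (2 * π - 0)⁻¹ • ∫ θ in (0 : ℝ)..2 * π, ‖F θ‖ ^ 2 :=
        sum_le_hasSum _ (fun _ _ => sq_nonneg _) hParseval
    _ ≤ C ^ 2 := by
        rw [sub_zero, smul_eq_mul, inv_mul_le_iff₀ two_pi_pos]
        linarith

open Filter Topology in
theorem MemHinf.summable_sq_norm_coef {f : ℂ → ℂ} (hf : MemHinf f) :
    Summable fun n => ‖coef f n‖ ^ 2 := by
  obtain ⟨hd, C, hC⟩ := hf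
  refine summable_of_sum_range_le (c := C ^ 2) (fun n => sq_nonneg _) fun N => ?_
  have hcont : Continuous fun r : ℝ => ∑ n ∈ range N, ‖coef f n * r ^ n‖ ^ 2 := by fun_prop
  have hlim := (hcont.tendsto 1).mono_left (nhdsWithin_le_nhds (s := Set.Iio 1))
  simp only [Complex.ofReal_one, one_pow, mul_one] at hlim
  refine le_of_tendsto hlim ?_
  filter_upwards [Ioo_mem_nhdsLT zero_lt_one] with r hr
  exact sum_range_sq_norm_coef_mul_pow_le hd hC (r := ⟨r, hr.1.le⟩) hr.1 hr.2 N

/-- for every `a ∈ H^∞` and `f ∈ H²`, the function `a·f`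
lies in the range `M(ā) = T_{\bar a} H²`, i.e. `aH² ⊆ M(ā)`. -/
theorem stmt1 (a f : ℂ → ℂ) (ha : MemHinf a) (hf : MemH2 f) :
    MemMbar a fun z => a z * f z := by
  obtain ⟨γ, hγ, hTγ⟩ := exists_summable_sq_tsum_conj_mul_eq ha.summable_sq_norm_coef hf.2
  obtain ⟨g, hg, hcoef⟩ := exists_memH2_coef_eq hγ
  refine ⟨g, hg, fun z hz => ?_⟩
  simp only [Tbar, hcoef, hTγ, ← coef_mul hf.1 ha.1]
  rw [mul_comm]
  exact (hasSum_coef_mul_pow (hf.1.mul ha.1) hz).tsum_eq.symm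
end
end

section
/- Let a(z) = ∏_{j=1}^N (z − ζ_j) with each ζ_j on the unit circle. Then the range space M(\bar{a}) = T_{\bar{a}} H^2 decomposes as the algebraic direct sum M(\bar{a}) = aH^2 ∔ P_{N−1}, where P_{N−1} is the space of polynomials of degree at most N−1; in particular the sum is direct: aH^2 ∩ P_{N−1} = {0}. -/
open Complex Set

noncomputable section

/-!
For `|ζⱼ| = 1` the polynomial `a` is self-inversive, `zᴺ ā(1/z) = c a(z)` with `|c| = 1`, so on
Taylor coefficients `T_ā f = c T_{z̄ᴺ}(a f)`, where `T_{z̄ᴺ}` drops the first `N` coefficients.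
Splitting `f = f₀ + zᴺ f₁` with `deg f₀ < N` gives `T_ā f = a (c f₁) + c T_{z̄ᴺ}(a f₀)`, the last
term a polynomial of degree `< N`. Conversely `a f + p = T_ā (c̄ (zᴺ f + s))`, where
`zᴺ p = a s + r` is division by `a`. For directness, if `a f = p` with `deg p < N`, the roots are
peeled off one at a time: if `(z - ζ) g` has eventually vanishing coefficients then `|ĝ n|` is
eventually constant, hence eventually zero because `ĝ n → 0`.
-/
open PowerSeries Filter Topology
open scoped Polynomial

def seriesFun (U : ℂ⟦X⟧) (z : ℂ) : ℂ := ∑' n, coeff n U * z ^ n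

def SummableOnDisk (U : ℂ⟦X⟧) : Prop :=
  ∀ z ∈ unitDisk, Summable fun n => ‖coeff n U * z ^ n‖

lemma coef_congr {f g : ℂ → ℂ} (h : EqOn f g unitDisk) (n : ℕ) : coef f n = coef g n := by
  have hfg : f =ᶠ[𝓝 0] g :=
    eventuallyEq_of_mem (Metric.isOpen_ball.mem_nhds (Metric.mem_ball_self one_pos)) h
  rw [coef, coef, hfg.iteratedDeriv_eq]

lemma norm_lt_one_of_mem_unitDisk {z : ℂ} (hz : z ∈ unitDisk) : ‖z‖ < 1 := by
  simpa [unitDisk] using hz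

lemma summableOnDisk_of_norm_le {U : ℂ⟦X⟧} {C : ℝ} (hC : ∀ n, ‖coeff n U‖ ≤ C) :
    SummableOnDisk U := fun z hz =>
  .of_nonneg_of_le (fun _ => norm_nonneg _)
    (fun n => by rw [norm_mul, norm_pow]; gcongr; exact hC n)
    ((summable_geometric_of_lt_one (norm_nonneg z) (norm_lt_one_of_mem_unitDisk hz)).mul_left C)

lemma summableOnDisk_coe (P : ℂ[X]) : SummableOnDisk P := fun _ _ =>
  summable_of_ne_finset_zero (s := Finset.range (P.natDegree + 1)) fun n hn => by
    rw [Polynomial.coeff_coe, P.coeff_eq_zero_of_natDegree_lt (by simpa using hn), zero_mul,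
      norm_zero]

lemma SummableOnDisk.mul {U V : ℂ⟦X⟧} (hU : SummableOnDisk U) (hV : SummableOnDisk V) :
    SummableOnDisk (U * V) := fun z hz => by
  refine (summable_norm_sum_mul_antidiagonal_of_summable_norm (hU z hz) (hV z hz)).congr
    fun n => ?_
  rw [coeff_mul, Finset.sum_mul]
  congr 1
  refine Finset.sum_congr rfl fun ij hij => ?_
  rw [← Finset.HasAntidiagonal.mem_antidiagonal.mp hij, pow_add]
  ring

lemma SummableOnDisk.seriesFun_mul {U V : ℂ⟦X⟧} (hU : SummableOnDisk U) (hV : SummableOnDisk V)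
    {z : ℂ} (hz : z ∈ unitDisk) : seriesFun (U * V) z = seriesFun U z * seriesFun V z := by
  rw [seriesFun, seriesFun, seriesFun,
    tsum_mul_tsum_eq_tsum_sum_antidiagonal_of_summable_norm (hU z hz) (hV z hz)]
  refine tsum_congr fun n => ?_
  rw [coeff_mul, Finset.sum_mul]
  refine Finset.sum_congr rfl fun ij hij => ?_
  rw [← Finset.HasAntidiagonal.mem_antidiagonal.mp hij, pow_add]
  ring

lemma SummableOnDisk.seriesFun_add {U V : ℂ⟦X⟧} (hU : SummableOnDisk U) (hV : SummableOnDisk V)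
    {z : ℂ} (hz : z ∈ unitDisk) : seriesFun (U + V) z = seriesFun U z + seriesFun V z := by
  simp only [seriesFun, map_add, add_mul]
  exact (hU z hz).of_norm.tsum_add (hV z hz).of_norm

lemma seriesFun_coe (P : ℂ[X]) (z : ℂ) : seriesFun P z = P.eval z := by
  rw [seriesFun, Polynomial.eval_eq_sum_range, tsum_eq_sum (s := Finset.range (P.natDegree + 1))]
  · simp only [Polynomial.coeff_coe]
  · intro n hn
    rw [Polynomial.coeff_coe, P.coeff_eq_zero_of_natDegree_lt (by simpa using hn), zero_mul]

lemma SummableOnDisk.hasFPowerSeriesOnBall {U : ℂ⟦X⟧} (hU : SummableOnDisk U) :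
    HasFPowerSeriesOnBall (seriesFun U) (FormalMultilinearSeries.ofScalars ℂ (coeff · U)) 0 1 := by
  set p := FormalMultilinearSeries.ofScalars ℂ (coeff · U)
  have hrad : 1 ≤ p.radius := ENNReal.le_of_forall_nnreal_lt fun r hr => by
    have hr1 : (r : ℂ) ∈ unitDisk := by simpa [unitDisk] using hr
    refine p.le_radius_of_summable_norm ((hU _ hr1).congr fun n => ?_)
    simp [p]
  convert (p.hasFPowerSeriesOnBall (zero_lt_one.trans_le hrad)).mono one_pos hrad using 1
  ext z
  simp [seriesFun, FormalMultilinearSeries.sum, p, mul_comm]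

lemma SummableOnDisk.differentiableOn {U : ℂ⟦X⟧} (hU : SummableOnDisk U) :
    DifferentiableOn ℂ (seriesFun U) unitDisk := by
  have h := hU.hasFPowerSeriesOnBall.differentiableOn
  rwa [← ENNReal.ofReal_one, Metric.eball_ofReal] at h

lemma coef_eq_coeff_of_hasFPowerSeriesOnBall {f : ℂ → ℂ} {p : FormalMultilinearSeries ℂ ℂ ℂ}
    {r : ENNReal} (h : HasFPowerSeriesOnBall f p 0 r) (n : ℕ) : coef f n = p.coeff n := by
  rw [coef, iteratedDeriv_eq_iteratedFDeriv, ← h.factorial_smul 1 n, nsmul_eq_mul,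
    FormalMultilinearSeries.coeff, mul_div_cancel_left₀ _ (by exact_mod_cast n.factorial_ne_zero)]
  rfl

lemma SummableOnDisk.coef_seriesFun {U : ℂ⟦X⟧} (hU : SummableOnDisk U) (n : ℕ) :
    coef (seriesFun U) n = coeff n U := by
  rw [coef_eq_coeff_of_hasFPowerSeriesOnBall hU.hasFPowerSeriesOnBall,
    FormalMultilinearSeries.coeff_ofScalars]

lemma SummableOnDisk.eq_of_eqOn {U V : ℂ⟦X⟧} (hU : SummableOnDisk U) (hV : SummableOnDisk V)
    (h : EqOn (seriesFun U) (seriesFun V) unitDisk) : U = V := by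
  ext n
  rw [← hU.coef_seriesFun, ← hV.coef_seriesFun, coef_congr h]

def taylorSeries (f : ℂ → ℂ) : ℂ⟦X⟧ := mk (coef f)

lemma coeff_taylorSeries (f : ℂ → ℂ) (n : ℕ) : coeff n (taylorSeries f) = coef f n :=
  coeff_mk _ _

lemma hasSum_coeff_taylorSeries_mul_pow {f : ℂ → ℂ} (hf : DifferentiableOn ℂ f unitDisk) {z : ℂ}
    (hz : z ∈ unitDisk) : HasSum (fun n => coeff n (taylorSeries f) * z ^ n) (f z) := by
  obtain ⟨R, hzR, hR1⟩ := exists_between (show ‖z‖₊ < 1 from norm_lt_one_of_mem_unitDisk hz)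
  have hp := (hf.mono (Metric.closedBall_subset_ball (by exact_mod_cast hR1))).hasFPowerSeriesOnBall
    (pos_of_gt hzR)
  have hzmem : z ∈ Metric.eball (0 : ℂ) R := by
    simpa [Metric.eball_coe] using (show ‖z‖ < R from hzR)
  simpa [taylorSeries, coef_eq_coeff_of_hasFPowerSeriesOnBall hp, mul_comm] using hp.hasSum hzmem

lemma eqOn_seriesFun_taylorSeries {f : ℂ → ℂ} (hf : DifferentiableOn ℂ f unitDisk) :
    EqOn f (seriesFun (taylorSeries f)) unitDisk := fun _ hz =>
  (hasSum_coeff_taylorSeries_mul_pow hf hz).tsum_eq.symm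

def SqSummable (U : ℂ⟦X⟧) : Prop := Summable fun n => ‖coeff n U‖ ^ 2

lemma MemH2.sqSummable_taylorSeries {f : ℂ → ℂ} (hf : MemH2 f) : SqSummable (taylorSeries f) := by
  simpa [SqSummable, taylorSeries] using hf.2

lemma SqSummable.norm_coeff_le {U : ℂ⟦X⟧} (hU : SqSummable U) (n : ℕ) :
    ‖coeff n U‖ ≤ √(∑' m, ‖coeff m U‖ ^ 2) :=
  Real.le_sqrt_of_sq_le (hU.le_tsum n fun _ _ => by positivity)

lemma SqSummable.summableOnDisk {U : ℂ⟦X⟧} (hU : SqSummable U) : SummableOnDisk U :=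
  summableOnDisk_of_norm_le hU.norm_coeff_le

lemma SqSummable.tendsto_coeff {U : ℂ⟦X⟧} (hU : SqSummable U) :
    Tendsto (fun n => coeff n U) atTop (𝓝 0) := by
  rw [tendsto_zero_iff_norm_tendsto_zero]
  simpa using (hU.tendsto_atTop_zero.sqrt)

lemma SqSummable.memH2_seriesFun {U : ℂ⟦X⟧} (hU : SqSummable U) : MemH2 (seriesFun U) :=
  ⟨hU.summableOnDisk.differentiableOn,
    by simpa only [SqSummable, hU.summableOnDisk.coef_seriesFun] using hU⟩

lemma SqSummable.add {U V : ℂ⟦X⟧} (hU : SqSummable U) (hV : SqSummable V) :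
    SqSummable (U + V) :=
  .of_nonneg_of_le (fun _ => by positivity)
    (fun n => (pow_le_pow_left₀ (norm_nonneg _) (norm_add_le _ _) 2).trans add_sq_le)
    ((Summable.add hU hV).mul_left 2)

lemma SqSummable.C_mul {U : ℂ⟦X⟧} (hU : SqSummable U) (c : ℂ) : SqSummable (C c * U) := by
  simpa [SqSummable, mul_pow] using hU.mul_left (‖c‖ ^ 2)

lemma sqSummable_coe (P : ℂ[X]) : SqSummable P :=
  summable_of_ne_finset_zero (s := Finset.range (P.natDegree + 1)) fun n hn => by
    rw [Polynomial.coeff_coe, P.coeff_eq_zero_of_natDegree_lt (by simpa using hn), norm_zero,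
      zero_pow two_ne_zero]

lemma SqSummable.X_pow_mul {U : ℂ⟦X⟧} (hU : SqSummable U) (N : ℕ) : SqSummable (X ^ N * U) := by
  rw [SqSummable, ← summable_nat_add_iff N]
  simpa [SqSummable] using hU

/-- The Toeplitz operator `T_{z̄ᴺ}` on Taylor coefficients. -/
def downShift (N : ℕ) (W : ℂ⟦X⟧) : ℂ⟦X⟧ := mk fun n => coeff (n + N) W

@[simp] lemma coeff_downShift (N n : ℕ) (W : ℂ⟦X⟧) : coeff n (downShift N W) = coeff (n + N) W :=
  coeff_mk _ _

section DownShift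

variable {N : ℕ}

lemma downShift_add (V W : ℂ⟦X⟧) : downShift N (V + W) = downShift N V + downShift N W := by
  ext n; simp

lemma downShift_C_mul (c : ℂ) (W : ℂ⟦X⟧) : downShift N (C c * W) = C c * downShift N W := by
  ext n; simp [coeff_C_mul]

@[simp] lemma downShift_X_pow_mul (W : ℂ⟦X⟧) : downShift N (X ^ N * W) = W := by
  ext n; simp

lemma downShift_coe_of_degree_lt {R : ℂ[X]} (hR : R.degree < N) : downShift N (R : ℂ⟦X⟧) = 0 := by
  ext n
  rw [coeff_downShift, Polynomial.coeff_coe, R.coeff_eq_zero_of_degree_lt, map_zero]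
  exact hR.trans_le (by exact_mod_cast N.le_add_left n)

lemma trunc_add_X_pow_mul_downShift (U : ℂ⟦X⟧) :
    (trunc N U : ℂ⟦X⟧) + X ^ N * downShift N U = U := by
  ext n
  rw [map_add, Polynomial.coeff_coe, coeff_trunc, coeff_X_pow_mul']
  split_ifs <;> simp_all [Nat.sub_add_cancel]
  omega

lemma coe_trunc_eq_self_of_coeff_eq_zero {W : ℂ⟦X⟧} (hW : ∀ n, N ≤ n → coeff n W = 0) :
    (trunc N W : ℂ⟦X⟧) = W := by
  ext n
  rw [Polynomial.coeff_coe, coeff_trunc]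
  split_ifs with h
  · rfl
  · exact (hW n (not_lt.mp h)).symm

lemma SqSummable.downShift {U : ℂ⟦X⟧} (hU : SqSummable U) : SqSummable (downShift N U) := by
  simpa [SqSummable] using (summable_nat_add_iff N).mpr hU

lemma exists_downShift_coe_mul_eq {P : ℂ[X]} (hP : P.natDegree ≤ N) (U : ℂ⟦X⟧) :
    ∃ Q : ℂ[X], Q.degree < N ∧ downShift N (P * U) = Q + P * downShift N U := by
  set D := downShift N (P * U) - P * downShift N U
  have hD : ∀ n, N ≤ n → coeff n D = 0 := by
    intro n hn
    have hlow : coeff (n + N) ((P : ℂ⟦X⟧) * (trunc N U : ℂ⟦X⟧)) = 0 := by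
      rw [← Polynomial.coe_mul, Polynomial.coeff_coe, Polynomial.coeff_mul]
      refine Finset.sum_eq_zero fun ij hij => ?_
      rw [Finset.HasAntidiagonal.mem_antidiagonal] at hij
      rcases le_or_gt ij.1 N with hi | hi
      · rw [coeff_trunc, if_neg (by omega), mul_zero]
      · rw [P.coeff_eq_zero_of_natDegree_lt (by omega), zero_mul]
    simp only [D, map_sub, coeff_downShift]
    nth_rewrite 1 [← trunc_add_X_pow_mul_downShift (N := N) U]
    rw [mul_add, map_add, hlow, zero_add, mul_left_comm, coeff_X_pow_mul, sub_self]
  refine ⟨trunc N D, degree_trunc_lt D N, ?_⟩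
  rw [coe_trunc_eq_self_of_coeff_eq_zero hD, sub_add_cancel]

lemma exists_downShift_coe_mul_eq_add {P : ℂ[X]} (hP : P.Monic) (hPN : P.natDegree = N)
    (U : ℂ⟦X⟧) (q : ℂ[X]) :
    ∃ S : ℂ[X],
      downShift N ((P : ℂ⟦X⟧) * (X ^ N * U + (S : ℂ⟦X⟧))) = (P : ℂ⟦X⟧) * U + (q : ℂ⟦X⟧) := by
  set S := (Polynomial.X ^ N * q) /ₘ P
  set R := (Polynomial.X ^ N * q) %ₘ P
  have hR : R.degree < N := by
    simpa [← hPN, ← Polynomial.degree_eq_natDegree hP.ne_zero] using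
      Polynomial.degree_modByMonic_lt _ hP
  have hdiv : (R : ℂ⟦X⟧) + (P : ℂ⟦X⟧) * (S : ℂ⟦X⟧) = X ^ N * (q : ℂ⟦X⟧) := by
    have h := congrArg (fun p : ℂ[X] => (p : ℂ⟦X⟧))
      (Polynomial.modByMonic_add_div (Polynomial.X ^ N * q) P)
    push_cast at h
    exact h
  have key : (P : ℂ⟦X⟧) * (X ^ N * U + (S : ℂ⟦X⟧)) + (R : ℂ⟦X⟧)
      = X ^ N * ((P : ℂ⟦X⟧) * U + (q : ℂ⟦X⟧)) := by
    linear_combination hdiv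
  refine ⟨S, ?_⟩
  rw [← add_zero (downShift N _), ← downShift_coe_of_degree_lt hR, ← downShift_add, key,
    downShift_X_pow_mul]

end DownShift

lemma tsum_coeff_mul_coeff_add_eq {N : ℕ} {Q : ℂ[X]} (hQ : Q.natDegree ≤ N) (U : ℂ⟦X⟧) (n : ℕ) :
    ∑' k, Q.coeff k * coeff (n + k) U = coeff (n + N) ((Q.reflect N : ℂ⟦X⟧) * U) := by
  have hfin : ∀ k ∉ Finset.range (N + 1), Q.coeff k * coeff (n + k) U = 0 := fun k hk => by
    rw [Q.coeff_eq_zero_of_natDegree_lt (by simp at hk; omega), zero_mul]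
  rw [tsum_eq_sum hfin, coeff_mul, Finset.Nat.sum_antidiagonal_eq_sum_range_succ
    (fun i j => coeff i (Q.reflect N : ℂ⟦X⟧) * coeff j U), ← Finset.sum_subset
    (Finset.range_subset_range.mpr (by omega : N + 1 ≤ (n + N).succ)), ← Finset.sum_range_reflect]
  · refine Finset.sum_congr rfl fun k hk => ?_
    have hk : k ≤ N := Finset.mem_range_succ_iff.mp hk
    rw [Polynomial.coeff_coe, Polynomial.coeff_reflect, Nat.add_sub_cancel,
      Polynomial.revAt_le hk, show n + N - k = n + (N - k) by omega]
  · intro i _ hi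
    have hi : N < i := by simpa using hi
    rw [Polynomial.coeff_coe, Polynomial.coeff_reflect, Polynomial.revAt_eq_self_of_lt hi,
      Q.coeff_eq_zero_of_natDegree_lt (by omega), zero_mul]

lemma coef_eval (P : ℂ[X]) (n : ℕ) : coef (fun z => P.eval z) n = P.coeff n := by
  rw [← funext (seriesFun_coe P), (summableOnDisk_coe P).coef_seriesFun, Polynomial.coeff_coe]

/-- `(P.map conj).reflect N` is `zᴺ P̄`, read on the unit circle. -/
lemma Tbar_eval_eq {N : ℕ} {P : ℂ[X]} {c : ℂ} (hP : P.natDegree ≤ N)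
    (hc : (P.map (starRingEnd ℂ)).reflect N = Polynomial.C c * P) (f : ℂ → ℂ) :
    Tbar (fun z => P.eval z) f = seriesFun (C c * downShift N (P * taylorSeries f)) := by
  funext z
  refine tsum_congr fun n => ?_
  have h := tsum_coeff_mul_coeff_add_eq ((Polynomial.natDegree_map (starRingEnd ℂ)).trans_le hP)
    (taylorSeries f) n
  simp only [Polynomial.coeff_map, coeff_taylorSeries, hc] at h
  simp only [coef_eval, h, coeff_C_mul, coeff_downShift, Polynomial.coe_mul, Polynomial.coe_C,
    mul_assoc]

lemma reflect_prod_X_sub_C {ι : Type*} (s : Finset ι) (w : ι → ℂ) :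
    (∏ i ∈ s, (Polynomial.X - Polynomial.C (w i))).reflect s.card
      = ∏ i ∈ s, (1 - Polynomial.C (w i) * Polynomial.X) := by
  induction s using Finset.cons_induction with
  | empty => simp
  | cons a s ha ih =>
    rw [Finset.prod_cons, Finset.prod_cons, Finset.card_cons, add_comm,
      Polynomial.reflect_mul _ _ (Polynomial.natDegree_X_sub_C_le _)
        ((Polynomial.natDegree_prod_le _ _).trans (by simp)), ih]
    congr 1
    rw [Polynomial.reflect_sub, Polynomial.reflect_C, ← pow_one Polynomial.X,
      Polynomial.reflect_monomial, pow_one]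
    simp

lemma reflect_map_conj_prod_X_sub_C {ι : Type*} (s : Finset ι) {w : ι → ℂ}
    (hw : ∀ i ∈ s, ‖w i‖ = 1) :
    ((∏ i ∈ s, (Polynomial.X - Polynomial.C (w i))).map (starRingEnd ℂ)).reflect s.card
      = Polynomial.C (∏ i ∈ s, -starRingEnd ℂ (w i))
          * ∏ i ∈ s, (Polynomial.X - Polynomial.C (w i)) := by
  rw [Polynomial.map_prod]
  simp only [Polynomial.map_sub, Polynomial.map_X, Polynomial.map_C]
  rw [reflect_prod_X_sub_C, map_prod, ← Finset.prod_mul_distrib]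
  refine Finset.prod_congr rfl fun i hi => ?_
  have hconj : starRingEnd ℂ (w i) * w i = 1 := by
    rw [mul_comm, Complex.mul_conj, Complex.normSq_eq_norm_sq, hw i hi]; norm_num
  rw [mul_sub, ← map_mul, neg_mul, hconj]
  simp only [map_neg, map_one]
  ring

lemma tendsto_coeff_coe_mul (P : ℂ[X]) {U : ℂ⟦X⟧} (hU : Tendsto (fun n => coeff n U) atTop (𝓝 0)) :
    Tendsto (fun n => coeff n ((P : ℂ⟦X⟧) * U)) atTop (𝓝 0) := by
  induction P using Polynomial.induction_on' with
  | add P Q hP hQ => simpa [add_mul] using hP.add hQ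
  | monomial m a =>
    have hshift : ∀ᶠ n in atTop,
        a * coeff (n - m) U = coeff n ((Polynomial.monomial m a : ℂ⟦X⟧) * U) :=
      eventually_atTop.mpr ⟨m, fun n hn => by
        rw [← Polynomial.C_mul_X_pow_eq_monomial]
        push_cast
        rw [mul_assoc, coeff_C_mul, coeff_X_pow_mul', if_pos hn]⟩
    simpa using (hU.comp (tendsto_sub_atTop_nat m)).const_mul a |>.congr' hshift

lemma coeff_eq_zero_of_coeff_X_sub_C_mul {w : ℂ} (hw : ‖w‖ = 1) {W : ℂ⟦X⟧}
    (hW : Tendsto (fun n => coeff n W) atTop (𝓝 0)) {M : ℕ}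
    (h : ∀ n, M < n → coeff n ((X - C w) * W) = 0) (n : ℕ) (hn : M ≤ n) : coeff n W = 0 := by
  have hstep : ∀ k, ‖coeff (M + k) W‖ = ‖coeff M W‖ := by
    intro k
    induction k with
    | zero => rfl
    | succ k ih =>
      have hk := h (M + k + 1) (by omega)
      rw [sub_mul, map_sub, coeff_succ_X_mul, coeff_C_mul, sub_eq_zero] at hk
      rw [← ih, hk, norm_mul, hw, one_mul, add_assoc]
  have hM : ‖coeff M W‖ = 0 := by
    have hlim := (hW.comp (tendsto_add_atTop_nat M)).norm
    simp only [Function.comp_def, norm_zero, add_comm _ M, hstep] at hlim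
    exact tendsto_nhds_unique tendsto_const_nhds hlim
  rw [← norm_eq_zero, ← Nat.add_sub_cancel' hn, hstep, hM]

lemma eq_zero_of_coeff_prod_X_sub_C_mul {ι : Type*} (s : Finset ι) {w : ι → ℂ}
    (hw : ∀ i ∈ s, ‖w i‖ = 1) {U : ℂ⟦X⟧} (hU : Tendsto (fun n => coeff n U) atTop (𝓝 0))
    (h : ∀ n, s.card ≤ n →
      coeff n (((∏ i ∈ s, (Polynomial.X - Polynomial.C (w i)) : ℂ[X]) : ℂ⟦X⟧) * U) = 0) :
    U = 0 := by
  induction s using Finset.cons_induction with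
  | empty => ext n; simpa using h n
  | cons a s ha ih =>
    refine ih (fun i hi => hw i (by simp [hi])) fun n hn => ?_
    refine coeff_eq_zero_of_coeff_X_sub_C_mul (hw a (by simp)) (tendsto_coeff_coe_mul _ hU)
      (fun m hm => ?_) n hn
    simpa [Finset.prod_cons, mul_assoc] using h m (by simp; omega)

section RangeSpace

variable {N : ℕ} {P : ℂ[X]} {c : ℂ}

lemma MemMbar.exists_eq_mul_add (hP : P.natDegree ≤ N)
    (hc : (P.map (starRingEnd ℂ)).reflect N = Polynomial.C c * P) {g : ℂ → ℂ}
    (hg : MemMbar (fun z => P.eval z) g) :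
    ∃ f p, MemH2 f ∧ MemPoly N p ∧ ∀ z ∈ unitDisk, g z = P.eval z * f z + p z := by
  obtain ⟨f, hf, hgf⟩ := hg
  obtain ⟨Q, hQ, hsplit⟩ := exists_downShift_coe_mul_eq hP (taylorSeries f)
  set H := C c * downShift N (taylorSeries f)
  have hH : SqSummable H := hf.sqSummable_taylorSeries.downShift.C_mul c
  have hdeg : (Polynomial.C c * Q).degree < N := by
    rw [← Polynomial.smul_eq_C_mul]
    exact (Polynomial.degree_smul_le c Q).trans_lt hQ
  have hTbar : C c * downShift N (P * taylorSeries f) = ↑(Polynomial.C c * Q) + P * H := by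
    rw [hsplit]
    push_cast
    ring
  refine ⟨seriesFun H, fun z => (Polynomial.C c * Q).eval z, hH.memH2_seriesFun,
    ⟨_, hdeg, fun _ => rfl⟩, fun z hz => ?_⟩
  have hPH := (summableOnDisk_coe P).mul hH.summableOnDisk
  rw [hgf hz, Tbar_eval_eq hP hc, hTbar, (summableOnDisk_coe _).seriesFun_add hPH hz,
    (summableOnDisk_coe P).seriesFun_mul hH.summableOnDisk hz, seriesFun_coe, seriesFun_coe,
    add_comm]

lemma memMbar_of_eq_mul_add (hP : P.Monic) (hPN : P.natDegree = N)
    (hc : (P.map (starRingEnd ℂ)).reflect N = Polynomial.C c * P) (hcc : c * starRingEnd ℂ c = 1)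
    {g f : ℂ → ℂ} (hf : MemH2 f) (q : ℂ[X]) (hg : ∀ z ∈ unitDisk, g z = P.eval z * f z + q.eval z) :
    MemMbar (fun z => P.eval z) g := by
  obtain ⟨S, hS⟩ := exists_downShift_coe_mul_eq_add hP hPN (taylorSeries f) q
  set H := C (starRingEnd ℂ c) * (X ^ N * taylorSeries f + (S : ℂ⟦X⟧))
  have hH : SqSummable H :=
    ((hf.sqSummable_taylorSeries.X_pow_mul N).add (sqSummable_coe S)).C_mul _
  have htaylor : taylorSeries (seriesFun H) = H := by
    ext n
    rw [coeff_taylorSeries, hH.summableOnDisk.coef_seriesFun]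
  have hTbar : C c * downShift N (P * H) = P * taylorSeries f + (q : ℂ⟦X⟧) := by
    rw [mul_left_comm, downShift_C_mul, hS, ← mul_assoc, ← map_mul, hcc, map_one, one_mul]
  have hPf := (summableOnDisk_coe P).mul hf.sqSummable_taylorSeries.summableOnDisk
  refine ⟨seriesFun H, hH.memH2_seriesFun, fun z hz => ?_⟩
  rw [hg z hz, Tbar_eval_eq hPN.le hc, htaylor, hTbar,
    hPf.seriesFun_add (summableOnDisk_coe q) hz,
    (summableOnDisk_coe P).seriesFun_mul hf.sqSummable_taylorSeries.summableOnDisk hz,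
    seriesFun_coe, seriesFun_coe, ← eqOn_seriesFun_taylorSeries hf.1 hz]

end RangeSpace

lemma eval_eq_zero_of_eval_prod_X_sub_C_mul_eq {ι : Type*} (s : Finset ι) {w : ι → ℂ}
    (hw : ∀ i ∈ s, ‖w i‖ = 1) {f : ℂ → ℂ} (hf : MemH2 f) {q : ℂ[X]} (hq : q.degree < s.card)
    (h : ∀ z ∈ unitDisk, (∏ i ∈ s, (Polynomial.X - Polynomial.C (w i))).eval z * f z = q.eval z) :
    ∀ z ∈ unitDisk, q.eval z = 0 := by
  set P := ∏ i ∈ s, (Polynomial.X - Polynomial.C (w i))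
  have hU := hf.sqSummable_taylorSeries
  have hPU : (P : ℂ⟦X⟧) * taylorSeries f = q := by
    refine ((summableOnDisk_coe P).mul hU.summableOnDisk).eq_of_eqOn (summableOnDisk_coe q)
      fun z hz => ?_
    rw [(summableOnDisk_coe P).seriesFun_mul hU.summableOnDisk hz, seriesFun_coe, seriesFun_coe,
      ← eqOn_seriesFun_taylorSeries hf.1 hz, h z hz]
  have hzero : taylorSeries f = 0 := by
    refine eq_zero_of_coeff_prod_X_sub_C_mul s hw hU.tendsto_coeff fun n hn => ?_
    rw [hPU, Polynomial.coeff_coe]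
    exact q.coeff_eq_zero_of_degree_lt (hq.trans_le (by exact_mod_cast hn))
  intro z hz
  rw [← h z hz, eqOn_seriesFun_taylorSeries hf.1 hz, hzero]
  simp [seriesFun]

/-- for `a(z) = ∏ (z - ζⱼ)` with all `ζⱼ` on the unit circle,
`M(ā) = aH² ∔ P_{N-1}`, and the sum is direct: `aH² ∩ P_{N-1} = {0}`. -/
theorem stmt4 (N : ℕ) (ζ : Fin N → ℂ) (hζ : ∀ j, ‖ζ j‖ = 1) :
    (∀ g, MemMbar (fun z => ∏ j, (z - ζ j)) g ↔
        ∃ f p, MemH2 f ∧ MemPoly N p ∧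
          ∀ z ∈ unitDisk, g z = (∏ j, (z - ζ j)) * f z + p z) ∧
      ∀ f p, MemH2 f → MemPoly N p →
        (∀ z ∈ unitDisk, (∏ j, (z - ζ j)) * f z = p z) →
          ∀ z ∈ unitDisk, p z = 0 := by
  set A : ℂ[X] := ∏ j, (Polynomial.X - Polynomial.C (ζ j))
  set c := ∏ j, -starRingEnd ℂ (ζ j)
  have hA : ∀ z, ∏ j, (z - ζ j) = A.eval z := fun z => by simp [A, Polynomial.eval_prod]
  have hAmonic : A.Monic := Polynomial.monic_prod_of_monic _ _ fun j _ => Polynomial.monic_X_sub_C _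
  have hAN : A.natDegree = N := by
    simp [A, Polynomial.natDegree_prod_of_monic, Polynomial.monic_X_sub_C]
  have hc : (A.map (starRingEnd ℂ)).reflect N = Polynomial.C c * A := by
    simpa only [Finset.card_univ, Fintype.card_fin] using
      reflect_map_conj_prod_X_sub_C Finset.univ fun j _ => hζ j
  have hcc : c * starRingEnd ℂ c = 1 := by
    rw [Complex.mul_conj, Complex.normSq_eq_norm_sq]
    simp [c, hζ]
  simp only [hA]
  refine ⟨fun g => ⟨MemMbar.exists_eq_mul_add hAN.le hc, ?_⟩, ?_⟩
  · rintro ⟨f, p, hf, ⟨q, -, hpq⟩, hg⟩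
    exact memMbar_of_eq_mul_add hAmonic hAN hc hcc hf q fun z hz => by rw [hg z hz, hpq]
  · rintro f p hf ⟨q, hq, hpq⟩ h z hz
    simp only [hpq] at h ⊢
    exact eval_eq_zero_of_eval_prod_X_sub_C_mul_eq Finset.univ (fun j _ => hζ j) hf
      (by simpa using hq) h z hz
end
end

section
/- Let a ∈ H^∞ be outer. The adjoint of X_{\bar{a}} = B|_{M(\bar{a})} on M(\bar{a}) is X_{\bar{a}}* = S_{\bar{a}} + 1 ⊗_{\bar{a}} T_{\bar{a}}Ba; that is, for f ∈ M(\bar{a}), X_{\bar{a}}* f = zf + ⟨f, T_{\bar{a}}Ba⟩_{\bar{a}} · 1. -/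
/-!
Put `w = z v`. The Taylor coefficients of `T_ā w` are those of `T_ā v` moved up by one,
together with the new constant coefficient `∑ₖ conj (â (k + 1)) v̂ k = ⟨v, Ba⟩`, and
`⟨Bu, v⟩ = ⟨u, zv⟩` is the coefficientwise adjointness of the backward and forward shifts.
The analytic input is `H^∞ ⊆ H²`: Parseval on the circles `|z| = r` bounds
`∑ |â n|² r^(2n)` by `sup |a|²`, and `r → 1`. It makes the coefficients of `T_ā v` bounded,
so the series defining `T_ā v` converges on the disk.
-/

open Complex Set

noncomputable section

open Filter Topology

lemma coef_eq_coeff {f : ℂ → ℂ} {p : FormalMultilinearSeries ℂ ℂ ℂ}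
    (hp : HasFPowerSeriesAt f p 0) (n : ℕ) : coef f n = p.coeff n := by
  obtain ⟨r, hr⟩ := hp
  rw [coef, iteratedDeriv_eq_iteratedFDeriv, ← hr.factorial_smul 1 n, nsmul_eq_mul,
    mul_div_cancel_left₀ _ (by exact_mod_cast n.factorial_ne_zero)]
  rfl

lemma Bshift_eq_dslope (f : ℂ → ℂ) : Bshift f = dslope f 0 := by
  funext z
  by_cases hz : z = 0
  · simp [Bshift, hz]
  · simp [Bshift, hz, dslope, slope, div_eq_inv_mul]

lemma coef_Bshift {f : ℂ → ℂ} (hf : AnalyticAt ℂ f 0) (n : ℕ) :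
    coef (Bshift f) n = coef f (n + 1) := by
  obtain ⟨p, hp⟩ := hf
  rw [Bshift_eq_dslope, coef_eq_coeff hp.has_fpower_series_dslope_fslope, coef_eq_coeff hp,
    p.coeff_fslope]

lemma Bshift_id_mul {v : ℂ → ℂ} (hv : DifferentiableAt ℂ v 0) :
    Bshift (fun z => z * v z) = v := by
  funext z
  by_cases hz : z = 0
  · subst hz
    have h := ((hasDerivAt_id' (0 : ℂ)).mul hv.hasDerivAt).deriv
    rw [one_mul, zero_mul, add_zero] at h
    rw [Bshift, if_pos rfl]
    exact h
  · simp [Bshift, hz]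

lemma coef_id_mul_zero (v : ℂ → ℂ) : coef (fun z => z * v z) 0 = 0 := by
  simp [coef]

lemma coef_id_mul_succ {v : ℂ → ℂ} (hv : AnalyticAt ℂ v 0) (n : ℕ) :
    coef (fun z => z * v z) (n + 1) = coef v n := by
  rw [← coef_Bshift (by fun_prop : AnalyticAt ℂ (fun z => z * v z) 0),
    Bshift_id_mul hv.differentiableAt]

lemma analyticAt_zero_of_differentiableOn_unitDisk {f : ℂ → ℂ}
    (hf : DifferentiableOn ℂ f unitDisk) : AnalyticAt ℂ f 0 :=
  hf.analyticAt (Metric.ball_mem_nhds 0 one_pos)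

lemma MemH2.id_mul {v : ℂ → ℂ} (hv : MemH2 v) : MemH2 fun z => z * v z := by
  refine ⟨differentiableOn_id.mul hv.1, (summable_nat_add_iff 1).mp ?_⟩
  simpa only [coef_id_mul_succ (analyticAt_zero_of_differentiableOn_unitDisk hv.1)] using hv.2

lemma tsum_eq_tsum_succ {M : Type*} [AddCommMonoid M] [TopologicalSpace M] {f : ℕ → M}
    (h0 : f 0 = 0) : ∑' n, f n = ∑' n, f (n + 1) := by
  refine (Function.Injective.tsum_eq Nat.succ_injective fun n hn => ?_).symm
  rcases n with _ | n
  · exact absurd h0 hn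
  · exact ⟨n, rfl⟩

lemma inner2_Bshift {u v : ℂ → ℂ} (hu : AnalyticAt ℂ u 0) (hv : AnalyticAt ℂ v 0) :
    inner2 (Bshift u) v = inner2 u fun z => z * v z := by
  rw [inner2, inner2, tsum_eq_tsum_succ (f := fun n => coef u n * _)
    (by rw [coef_id_mul_zero, map_zero, mul_zero])]
  simp only [coef_Bshift hu, coef_id_mul_succ hv]

lemma fourierCoeffOn_circleMap {f : ℂ → ℂ} (hf : DifferentiableOn ℂ f unitDisk) {r : ℝ}
    (hr0 : 0 < r) (hr1 : r < 1) (n : ℕ) :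
    fourierCoeffOn Real.two_pi_pos (fun θ => f (circleMap 0 r θ)) n = coef f n * r ^ n := by
  have hball : Metric.closedBall (0 : ℂ) r ⊆ unitDisk := Metric.closedBall_subset_ball hr1
  have h := (hf.mono hball).circleIntegral_one_div_sub_center_pow_smul hr0 n
  rw [circleIntegral] at h
  rw [fourierCoeffOn_eq_integral]
  simp only [deriv_circleMap, fourier_coe_apply, smul_eq_mul] at h ⊢
  have hr : (r : ℂ) ≠ 0 := by exact_mod_cast hr0.ne'
  have hpt : ∀ θ : ℝ,
      circleMap 0 r θ * I * (1 / (circleMap 0 r θ - 0) ^ (n + 1) * f (circleMap 0 r θ))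
      = I / r ^ n * (cexp (2 * Real.pi * I * ((-n : ℤ) : ℂ) * θ / ((2 * Real.pi - 0 : ℝ) : ℂ))
        * f (circleMap 0 r θ)) := by
    intro θ
    have he : cexp (2 * Real.pi * I * ((-n : ℤ) : ℂ) * θ / ((2 * Real.pi - 0 : ℝ) : ℂ))
        = (cexp (θ * I) ^ n)⁻¹ := by
      rw [← Complex.exp_nat_mul, ← Complex.exp_neg]
      congr 1
      push_cast
      field_simp
      ring
    rw [circleMap_zero, he, sub_zero]
    field_simp [Complex.exp_ne_zero]
    ring
  simp only [hpt, intervalIntegral.integral_const_mul] at h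
  set J := ∫ θ in (0 : ℝ)..2 * Real.pi,
    cexp (2 * Real.pi * I * ((-n : ℤ) : ℂ) * θ / ((2 * Real.pi - 0 : ℝ) : ℂ)) * f (circleMap 0 r θ)
  clear_value J
  rw [coef, Complex.real_smul]
  push_cast
  field_simp at h ⊢
  rw [h]
  ring

lemma sum_sq_coef_mul_pow_le {f : ℂ → ℂ} (hf : DifferentiableOn ℂ f unitDisk) {C : ℝ}
    (hC : ∀ z ∈ unitDisk, ‖f z‖ ≤ C) {r : ℝ} (hr0 : 0 < r) (hr1 : r < 1) (N : ℕ) :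
    ∑ n ∈ Finset.range N, ‖coef f n‖ ^ 2 * r ^ (2 * n) ≤ C ^ 2 := by
  set g : ℝ → ℂ := fun θ => f (circleMap 0 r θ)
  have hg_mem (θ : ℝ) : circleMap 0 r θ ∈ unitDisk :=
    Metric.closedBall_subset_ball hr1 (circleMap_mem_closedBall 0 hr0.le θ)
  have hg : Continuous g :=
    hf.continuousOn.comp_continuous (continuous_circleMap 0 r) hg_mem
  have hL2 : MeasureTheory.MemLp g 2 (MeasureTheory.volume.restrict (Ioc 0 (2 * Real.pi))) :=
    .of_bound hg.aestronglyMeasurable C (.of_forall fun θ => hC _ (hg_mem θ))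
  have hparseval := hasSum_sq_fourierCoeffOn Real.two_pi_pos hL2
  have hcoef (n : ℕ) : fourierCoeffOn Real.two_pi_pos g n = coef f n * r ^ n :=
    fourierCoeffOn_circleMap hf hr0 hr1 n
  have hmean : (2 * Real.pi - 0)⁻¹ • ∫ θ in (0 : ℝ)..2 * Real.pi, ‖g θ‖ ^ 2 ≤ C ^ 2 := by
    have hint : ∫ θ in (0 : ℝ)..2 * Real.pi, ‖g θ‖ ^ 2 ≤ ∫ _ in (0 : ℝ)..2 * Real.pi, C ^ 2 :=
      intervalIntegral.integral_mono_on Real.two_pi_pos.le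
        ((hg.norm.pow 2).intervalIntegrable _ _) intervalIntegrable_const
        fun θ _ => pow_le_pow_left₀ (norm_nonneg _) (hC _ (hg_mem θ)) 2
    rw [intervalIntegral.integral_const, smul_eq_mul] at hint
    rw [smul_eq_mul, sub_zero, inv_mul_le_iff₀ Real.two_pi_pos]
    linarith
  calc ∑ n ∈ Finset.range N, ‖coef f n‖ ^ 2 * r ^ (2 * n)
      = ∑ n ∈ (Finset.range N).map Nat.castEmbedding, ‖fourierCoeffOn Real.two_pi_pos g n‖ ^ 2 := by
        simp only [Finset.sum_map, Nat.castEmbedding_apply, hcoef, norm_mul, norm_pow,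
          Complex.norm_real, Real.norm_eq_abs, abs_of_pos hr0]
        exact Finset.sum_congr rfl fun n _ => by ring
    _ ≤ _ := sum_le_hasSum _ (fun _ _ => by positivity) hparseval
    _ ≤ C ^ 2 := hmean

lemma MemHinf.memH2 {f : ℂ → ℂ} (hf : MemHinf f) : MemH2 f := by
  obtain ⟨hd, C, hC⟩ := hf
  refine ⟨hd, summable_of_sum_range_le (c := C ^ 2) (fun n => by positivity) fun N => ?_⟩
  have hlim : Tendsto (fun r : ℝ => ∑ n ∈ Finset.range N, ‖coef f n‖ ^ 2 * r ^ (2 * n))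
      (𝓝[<] 1) (𝓝 (∑ n ∈ Finset.range N, ‖coef f n‖ ^ 2)) := by
    have h := ((by fun_prop : Continuous fun r : ℝ =>
      ∑ n ∈ Finset.range N, ‖coef f n‖ ^ 2 * r ^ (2 * n)).tendsto 1).mono_left
        (nhdsWithin_le_nhds (s := Iio 1))
    simpa using h
  refine le_of_tendsto hlim ?_
  filter_upwards [Ioo_mem_nhdsLT one_pos] with r hr
  exact sum_sq_coef_mul_pow_le hd hC hr.1 hr.2 N

lemma norm_tsum_conj_mul_le {ι : Type*} {α β : ι → ℂ} (hα : Summable fun k => ‖α k‖ ^ 2)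
    (hβ : Summable fun k => ‖β k‖ ^ 2) :
    ‖∑' k, starRingEnd ℂ (α k) * β k‖ ≤ ∑' k, ‖α k‖ ^ 2 + ∑' k, ‖β k‖ ^ 2 := by
  have hterm (k : ι) : ‖starRingEnd ℂ (α k) * β k‖ ≤ ‖α k‖ ^ 2 + ‖β k‖ ^ 2 := by
    rw [norm_mul, RCLike.norm_conj]
    nlinarith [sq_nonneg (‖α k‖ - ‖β k‖), norm_nonneg (α k), norm_nonneg (β k)]
  have hnorm : Summable fun k => ‖starRingEnd ℂ (α k) * β k‖ :=
    .of_nonneg_of_le (fun _ => norm_nonneg _) hterm (hα.add hβ)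
  calc ‖∑' k, starRingEnd ℂ (α k) * β k‖ ≤ ∑' k, ‖starRingEnd ℂ (α k) * β k‖ :=
        norm_tsum_le_tsum_norm hnorm
    _ ≤ ∑' k, (‖α k‖ ^ 2 + ‖β k‖ ^ 2) := hnorm.tsum_le_tsum hterm (hα.add hβ)
    _ = ∑' k, ‖α k‖ ^ 2 + ∑' k, ‖β k‖ ^ 2 := hα.tsum_add hβ

def tbarCoef (a f : ℂ → ℂ) (n : ℕ) : ℂ :=
  ∑' k, starRingEnd ℂ (coef a k) * coef f (n + k)

lemma Tbar_eq_tsum (a f : ℂ → ℂ) (z : ℂ) : Tbar a f z = ∑' n, tbarCoef a f n * z ^ n := rfl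

lemma norm_tbarCoef_le {a f : ℂ → ℂ} (ha : Summable fun k => ‖coef a k‖ ^ 2)
    (hf : Summable fun k => ‖coef f k‖ ^ 2) (n : ℕ) :
    ‖tbarCoef a f n‖ ≤ ∑' k, ‖coef a k‖ ^ 2 + ∑' k, ‖coef f k‖ ^ 2 := by
  have htail : Summable fun k => ‖coef f (n + k)‖ ^ 2 :=
    (summable_nat_add_iff n).mpr hf |>.congr fun k => by rw [add_comm]
  have htail_le : ∑' k, ‖coef f (n + k)‖ ^ 2 ≤ ∑' k, ‖coef f k‖ ^ 2 :=
    htail.tsum_le_tsum_of_inj (n + ·) (add_right_injective n) (fun _ _ => by positivity)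
      (fun _ => le_rfl) hf
  exact (norm_tsum_conj_mul_le ha htail).trans (add_le_add_right htail_le _)

lemma summable_tbarCoef_mul_pow {a f : ℂ → ℂ} (ha : Summable fun k => ‖coef a k‖ ^ 2)
    (hf : Summable fun k => ‖coef f k‖ ^ 2) {z : ℂ} (hz : z ∈ unitDisk) :
    Summable fun n => tbarCoef a f n * z ^ n := by
  have hz1 : ‖z‖ < 1 := by simpa [unitDisk] using hz
  refine .of_norm_bounded ((summable_geometric_of_lt_one (norm_nonneg z) hz1).mul_left
    (∑' k, ‖coef a k‖ ^ 2 + ∑' k, ‖coef f k‖ ^ 2)) fun n => ?_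
  rw [norm_mul, norm_pow]
  exact mul_le_mul_of_nonneg_right (norm_tbarCoef_le ha hf n) (by positivity)

lemma tbarCoef_id_mul_zero {a v : ℂ → ℂ} (ha : AnalyticAt ℂ a 0) (hv : AnalyticAt ℂ v 0) :
    tbarCoef a (fun z => z * v z) 0 = inner2 v (Bshift a) := by
  rw [tbarCoef, tsum_eq_tsum_succ (by rw [zero_add, coef_id_mul_zero, mul_zero]), inner2]
  exact tsum_congr fun k => by rw [zero_add, coef_id_mul_succ hv, coef_Bshift ha, mul_comm]

lemma tbarCoef_id_mul_succ (a : ℂ → ℂ) {v : ℂ → ℂ} (hv : AnalyticAt ℂ v 0) (n : ℕ) :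
    tbarCoef a (fun z => z * v z) (n + 1) = tbarCoef a v n :=
  tsum_congr fun k => by rw [add_right_comm, coef_id_mul_succ hv]

lemma Tbar_id_mul {a v : ℂ → ℂ} (ha : MemH2 a) (hv : MemH2 v) {z : ℂ} (hz : z ∈ unitDisk) :
    Tbar a (fun z => z * v z) z = z * Tbar a v z + inner2 v (Bshift a) := by
  have ha0 := analyticAt_zero_of_differentiableOn_unitDisk ha.1
  have hv0 := analyticAt_zero_of_differentiableOn_unitDisk hv.1
  have hshift (n : ℕ) : tbarCoef a (fun z => z * v z) (n + 1) * z ^ (n + 1)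
      = z * (tbarCoef a v n * z ^ n) := by
    rw [tbarCoef_id_mul_succ a hv0, pow_succ]
    ring
  have hsum := summable_tbarCoef_mul_pow ha.2 hv.2 hz
  rw [Tbar_eq_tsum, Tbar_eq_tsum, tsum_eq_zero_add' (by simpa only [hshift] using hsum.mul_left z),
    tbarCoef_id_mul_zero ha0 hv0]
  simp only [hshift, tsum_mul_left, pow_zero, mul_one]
  ring

theorem stmt17_general (a : ℂ → ℂ) (ha : MemHinf a)
    (v : ℂ → ℂ) (hv : MemH2 v) :
    ∃ w, MemH2 w ∧
      (∀ z ∈ unitDisk, Tbar a w z = z * Tbar a v z + inner2 v (Bshift a)) ∧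
      ∀ u, MemH2 u → inner2 (Bshift u) v = inner2 u w :=
  ⟨fun z => z * v z, hv.id_mul, fun _ hz => Tbar_id_mul ha.memH2 hv hz, fun _ hu =>
    inner2_Bshift (analyticAt_zero_of_differentiableOn_unitDisk hu.1)
      (analyticAt_zero_of_differentiableOn_unitDisk hv.1)⟩

/-- for outer `a ∈ H^∞`, the adjoint of `X_{ā} = B|_{M(ā)}` is
`X_{ā}* = S_{ā} + 1 ⊗_{ā} T_{ā}(Ba)`: for `f = T_{ā} v ∈ M(ā)`,
`X_{ā}* f = z f + ⟨f, T_{ā}(Ba)⟩_{ā} · 1`, where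
`⟨T_{ā}v, T_{ā}(Ba)⟩_{ā} = ⟨v, Ba⟩_{H²}`; the adjoint relation is expressed
via preimages: `⟨B u, v⟩_{H²} = ⟨X_{ā}(T_{ā}u), T_{ā}v⟩_{ā} = ⟨u, w⟩_{H²}` where
`T_{ā} w = X_{ā}*(T_{ā} v)`. -/
theorem stmt17 (a : ℂ → ℂ) (ha : MemHinf a) (hao : Outer a)
    (v : ℂ → ℂ) (hv : MemH2 v) :
    ∃ w, MemH2 w ∧
      (∀ z ∈ unitDisk, Tbar a w z = z * Tbar a v z + inner2 v (Bshift a)) ∧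
      ∀ u, MemH2 u → inner2 (Bshift u) v = inner2 u w :=
  stmt17_general a ha v hv
end
end
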